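/- arXiv:2602.21674 — 2 statements merged into one kernel-verified Lean document; each statement's English description precedes it below -/
import Mathlib

section
/- C-apartness with respect to a complete reference refines ordinary apartness: if T is an observation tree for Mealy machine M, L is complete for M (every word producing an e-ending output in M lies outside L), and tree states p, q are C-apart with respect to L, then m(p) and m(q) are inequivalent states of M. -/
structure Mealy (I O : Type) where
  Q : Type
  q0 : Q
  trans : Q → I → Q
  out1 : Q → I → O

namespace Mealy

variable {I O : Type}

def run (M : Mealy I O) : M.Q → List I → M.Q
  | q, [] => q
  | q, i :: σ => M.run (M.trans q i) σ

def out (M : Mealy I O) : M.Q → List I → List O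
  | _, [] => []
  | q, i :: σ => M.out1 q i :: M.out (M.trans q i) σ

/-- `M` is `e`-persistent: once the output word ends in `e`, appending any
input keeps the last output equal to `e`. -/
def EPersistent (M : Mealy I O) (e : O) : Prop :=
  ∀ (σ : List I) (i : I),
    (M.out M.q0 σ).getLast? = some e →
    (M.out M.q0 (σ ++ [i])).getLast? = some e

end Mealy

structure PMealy (I O : Type) where
  Q : Type
  q0 : Q
  trans : Q → I → Option Q
  out1 : Q → I → Option O

namespace PMealy

variable {I O : Type}

def pout (M : PMealy I O) : M.Q → List I → Option (List O)
  | _, [] => some []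
  | q, i :: σ =>
    match M.out1 q i, M.trans q i with
    | some o, some q' => (M.pout q' σ).map (o :: ·)
    | _, _ => none

def prun (M : PMealy I O) : M.Q → List I → Option M.Q
  | q, [] => some q
  | q, i :: σ =>
    match M.trans q i with
    | some q' => M.prun q' σ
    | none => none

/-- States `p` and `q` are apart: some input word on which both outputs are
defined produces different output words. -/
def Apart (M : PMealy I O) (p q : M.Q) : Prop :=
  ∃ (σ : List I) (a b : List O),
    M.pout p σ = some a ∧ M.pout q σ = some b ∧ a ≠ b

end PMealy

/-- Tree states `p, q` are `C`-apart w.r.t. the reference `L`: there is a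
word `σ` on which the defined tree outputs differ, or the output from one
state is defined with last symbol `e` while the access word of the other
state extended by `σ` lies in `L`. -/
def CApart {I O : Type} (T : PMealy I O) (e : O) (L : Set (List I))
    (acc : T.Q → List I) (p q : T.Q) : Prop :=
  ∃ σ : List I,
    (∃ a b : List O, T.pout p σ = some a ∧ T.pout q σ = some b ∧ a ≠ b) ∨
    (∃ a : List O, T.pout p σ = some a ∧ a.getLast? = some e ∧ acc q ++ σ ∈ L) ∨
    (∃ b : List O, T.pout q σ = some b ∧ b.getLast? = some e ∧ acc p ++ σ ∈ L)

/-! Outputs of the tree are the outputs of `M` at the mapped states, and access words lead `M`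
from its initial state to `m q`. A C-apartness witness `σ` therefore either distinguishes `m p`
from `m q` outright, or, were `m p` and `m q` equivalent, `acc q ++ σ` would produce an
`e`-ending output in `M` while lying in `L`, contradicting completeness. -/

namespace Mealy

variable {I O : Type} (M : Mealy I O)

theorem out_append (s : M.Q) (σ τ : List I) :
    M.out s (σ ++ τ) = M.out s σ ++ M.out (M.run s σ) τ := by
  induction σ generalizing s with
  | nil => rfl
  | cons i σ ih => simp [out, run, ih]

theorem out_ne_of_getLast?_eq_of_mem {e : O} {L : Set (List I)}
    (hcomplete : ∀ σ : List I, (M.out M.q0 σ).getLast? = some e → σ ∉ L)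
    {w σ : List I} {s s' : M.Q} (hs : M.run M.q0 w = s)
    (hlast : (M.out s' σ).getLast? = some e) (hmem : w ++ σ ∈ L) :
    M.out s' σ ≠ M.out s σ := by
  intro heq
  refine hcomplete (w ++ σ) ?_ hmem
  rw [out_append, hs, ← heq, List.getLast?_append, hlast, Option.some_or]

end Mealy

namespace PMealy

variable {I O : Type} {M : Mealy I O} {T : PMealy I O} {m : T.Q → M.Q}
  (hobs : ∀ (q : T.Q) (i : I) (q' : T.Q), T.trans q i = some q' →
    M.trans (m q) i = m q' ∧ T.out1 q i = some (M.out1 (m q) i))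
include hobs

theorem pout_eq_out {σ : List I} {r : T.Q} {a : List O} (h : T.pout r σ = some a) :
    a = M.out (m r) σ := by
  induction σ generalizing r a with
  | nil => simp_all [pout, Mealy.out]
  | cons i σ ih =>
    simp only [pout] at h
    cases ht : T.trans r i with
    | none => cases T.out1 r i <;> simp [ht] at h
    | some r' =>
      obtain ⟨htrans, hout⟩ := hobs r i r' ht
      simp only [ht, hout, Option.map_eq_some_iff] at h
      obtain ⟨b, hb, rfl⟩ := h
      simp [Mealy.out, htrans, ih hb]

theorem prun_eq_run {σ : List I} {r r' : T.Q} (h : T.prun r σ = some r') :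
    M.run (m r) σ = m r' := by
  induction σ generalizing r with
  | nil => simp_all [prun, Mealy.run]
  | cons i σ ih =>
    simp only [prun] at h
    cases ht : T.trans r i with
    | none => simp [ht] at h
    | some s =>
      simp only [ht] at h
      simp [Mealy.run, (hobs r i s ht).1, ih h]

end PMealy

/-- If `T` is an observation tree for `M`, `L` is complete for `M` (every
word producing an `e`-ending output lies outside `L`), and tree states
`p, q` are `C`-apart w.r.t. `L`, then `m p` and `m q` are inequivalent
states of `M`. -/
theorem stmt9 {I O : Type} (M : Mealy I O) (e : O) (T : PMealy I O)
    (m : T.Q → M.Q) (acc : T.Q → List I)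
    (hroot : m T.q0 = M.q0)
    (hobs : ∀ (q : T.Q) (i : I) (q' : T.Q), T.trans q i = some q' →
      M.trans (m q) i = m q' ∧ T.out1 q i = some (M.out1 (m q) i))
    (hacc : ∀ q : T.Q, T.prun T.q0 (acc q) = some q)
    (L : Set (List I))
    (hcomplete : ∀ σ : List I, (M.out M.q0 σ).getLast? = some e → σ ∉ L)
    (p q : T.Q) (hap : CApart T e L acc p q) :
    ∃ σ : List I, M.out (m p) σ ≠ M.out (m q) σ := by
  have hrun (r : T.Q) : M.run M.q0 (acc r) = m r :=
    hroot ▸ PMealy.prun_eq_run hobs (hacc r)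
  obtain ⟨σ, ⟨a, b, ha, hb, hab⟩ | ⟨a, ha, hlast, hmem⟩ | ⟨b, hb, hlast, hmem⟩⟩ := hap
  · rw [PMealy.pout_eq_out hobs ha, PMealy.pout_eq_out hobs hb] at hab
    exact ⟨σ, hab⟩
  · rw [PMealy.pout_eq_out hobs ha] at hlast
    exact ⟨σ, M.out_ne_of_getLast?_eq_of_mem hcomplete (hrun q) hlast hmem⟩
  · rw [PMealy.pout_eq_out hobs hb] at hlast
    exact ⟨σ, (M.out_ne_of_getLast?_eq_of_mem hcomplete (hrun p) hlast hmem).symm⟩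
end

section
/- If L is a sound and complete reference for an e-persistent Mealy machine M, and A ⊆ I* contains for every reachable accepting state of the minimal DFA R of L some word reaching it from the initial state, then the words of A reach exactly |R_acc| pairwise-inequivalent states of M, where |R_acc| is the number of distinct reachable accepting states of R; in particular M has at least |R_acc| states. -/
/-!
Two accepting states `s ≠ t` of the minimal DFA are separated by some word `w`, necessarily
nonempty since both are accepting. If the `M`-states reached by words `a`, `b` leading to `s`,
`t` produced the same output on `w`, then `a ++ w` and `b ++ w` would end in the same output
symbol, so by soundness and completeness they would lie in `L` together, contradicting that `w`
separates `s` from `t`.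
-/

namespace Mealy

variable {I O : Type}

theorem out_append_s11 (M : Mealy I O) (q : M.Q) (u w : List I) :
    M.out q (u ++ w) = M.out q u ++ M.out (M.run q u) w := by
  induction u generalizing q with
  | nil => rfl
  | cons i u ih => simp [out, run, ih]

theorem length_out (M : Mealy I O) (q : M.Q) (w : List I) :
    (M.out q w).length = w.length := by
  induction w generalizing q with
  | nil => rfl
  | cons i w ih => simp [out, ih]

theorem getLast?_out_append {M : Mealy I O} (q : M.Q) (u : List I) {w : List I} (hw : w ≠ []) :
    (M.out q (u ++ w)).getLast? = (M.out (M.run q u) w).getLast? := by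
  have hne : M.out (M.run q u) w ≠ [] := by
    rw [← List.length_pos_iff, length_out]
    exact List.length_pos_iff.mpr hw
  rw [out_append_s11, List.getLast?_append, Option.or_of_isSome (List.getLast?_isSome.mpr hne)]

theorem mem_iff_getLast?_out_ne {M : Mealy I O} {e : O} {L : Set (List I)}
    (hsound : ∀ σ ∉ L, (M.out M.q0 σ).getLast? = some e)
    (hcomplete : ∀ σ : List I, (M.out M.q0 σ).getLast? = some e → σ ∉ L) (σ : List I) :
    σ ∈ L ↔ (M.out M.q0 σ).getLast? ≠ some e :=
  ⟨fun hσ he => hcomplete σ he hσ, fun hσ => by_contra fun hn => hσ (hsound σ hn)⟩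

theorem mem_append_iff_of_out_eq {M : Mealy I O} {e : O} {L : Set (List I)}
    (hsound : ∀ σ ∉ L, (M.out M.q0 σ).getLast? = some e)
    (hcomplete : ∀ σ : List I, (M.out M.q0 σ).getLast? = some e → σ ∉ L)
    {u v w : List I} (hw : w ≠ [])
    (hout : M.out (M.run M.q0 u) w = M.out (M.run M.q0 v) w) :
    u ++ w ∈ L ↔ v ++ w ∈ L := by
  rw [mem_iff_getLast?_out_ne hsound hcomplete, mem_iff_getLast?_out_ne hsound hcomplete,
    getLast?_out_append _ _ hw, getLast?_out_append _ _ hw, hout]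

theorem exists_out_ne_of_eval_ne {Qr : Type} {M : Mealy I O} {e : O} {R : DFA I Qr}
    {L : Set (List I)} (hL : ∀ σ : List I, σ ∈ L ↔ R.eval σ ∈ R.accept)
    (hsound : ∀ σ ∉ L, (M.out M.q0 σ).getLast? = some e)
    (hcomplete : ∀ σ : List I, (M.out M.q0 σ).getLast? = some e → σ ∉ L)
    (hRmin : ∀ p q : Qr, p ≠ q →
      ∃ w : List I, (R.evalFrom p w ∈ R.accept ↔ R.evalFrom q w ∉ R.accept))
    {u v : List I} (hacc : R.eval u ∈ R.accept ↔ R.eval v ∈ R.accept)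
    (huv : R.eval u ≠ R.eval v) :
    ∃ σ : List I, M.out (M.run M.q0 u) σ ≠ M.out (M.run M.q0 v) σ := by
  obtain ⟨w, hw⟩ := hRmin _ _ huv
  have hw_ne : w ≠ [] := by
    rintro rfl
    simp only [DFA.evalFrom_nil] at hw
    tauto
  refine ⟨w, fun hout => ?_⟩
  have hmem := mem_append_iff_of_out_eq hsound hcomplete hw_ne hout
  have heval : ∀ x, R.eval (x ++ w) = R.evalFrom (R.eval x) w := fun x =>
    R.evalFrom_of_append R.start x w
  rw [hL, hL, heval, heval] at hmem
  exact iff_not_self (hmem.symm.trans hw)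

end Mealy

/-- If `L` is sound and complete for `M` and `A` contains, for every
reachable accepting state of the minimal DFA `R` of `L`, a word reaching it,
then the words of `A` reach, for the reachable accepting states of `R`,
pairwise-inequivalent states of `M`; in particular `M` has at least as many
states as `R` has reachable accepting states. -/
theorem stmt11 {I O Qr : Type} (M : Mealy I O) (e : O) (R : DFA I Qr)
    (L : Set (List I))
    (hL : ∀ σ : List I, σ ∈ L ↔ R.eval σ ∈ R.accept)
    (hsound : ∀ σ ∉ L, (M.out M.q0 σ).getLast? = some e)
    (hcomplete : ∀ σ : List I, (M.out M.q0 σ).getLast? = some e → σ ∉ L)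
    (hRmin : ∀ p q : Qr, p ≠ q →
      ∃ w : List I, (R.evalFrom p w ∈ R.accept ↔ R.evalFrom q w ∉ R.accept))
    (A : Set (List I))
    (hAcov : ∀ s : Qr, s ∈ R.accept → (∃ w : List I, R.eval w = s) →
      ∃ a ∈ A, R.eval a = s) :
    ∃ f : {s : Qr // s ∈ R.accept ∧ ∃ w : List I, R.eval w = s} → M.Q,
      (∀ s, ∃ a ∈ A, R.eval a = s.1 ∧ M.run M.q0 a = f s) ∧
      (∀ s t, s ≠ t → ∃ σ : List I, M.out (f s) σ ≠ M.out (f t) σ) ∧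
      Function.Injective f := by
  choose a ha hRa using fun s : {s : Qr // s ∈ R.accept ∧ ∃ w : List I, R.eval w = s} =>
    hAcov s.1 s.2.1 s.2.2
  have hineq : ∀ s t, s ≠ t →
      ∃ σ : List I, M.out (M.run M.q0 (a s)) σ ≠ M.out (M.run M.q0 (a t)) σ := by
    intro s t hst
    refine Mealy.exists_out_ne_of_eval_ne hL hsound hcomplete hRmin ?_ ?_ <;> rw [hRa s, hRa t]
    · exact iff_of_true s.2.1 t.2.1
    · exact Subtype.coe_injective.ne hst
  refine ⟨fun s => M.run M.q0 (a s), fun s => ⟨a s, ha s, hRa s, rfl⟩, hineq,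
    fun s t hst => ?_⟩
  by_contra hne
  obtain ⟨σ, hσ⟩ := hineq s t hne
  exact hσ (congrArg (M.out · σ) hst)
end
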